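/- Let n ≥ 1 be an integer. Then for every integer k ≥ 0 and every real x, the polynomials η_k^{(n)} admit the explicit expansion η_k^{(n)}(x) = Σ_{j=0}^{k} (−1)^j·( x^j / j! )·ρ_{k-j}(x), where ρ_m(x) = [nx]_m / ( m!·(n)_m ), [t]_m = t(t-1)⋯(t-m+1) is the falling factorial and (n)_m = n(n+1)⋯(n+m-1) is the rising factorial. -/

import Mathlib

open Filter Topology Finset

/-- Baskakov basis functions `v_{k,n}(x) = C(n+k-1, k) x^k (1+x)^{-(n+k)}`. -/
noncomputable def baskakovBasis (n k : ℕ) (x : ℝ) : ℝ :=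
  (Nat.choose (n + k - 1) k : ℝ) * x ^ k / (1 + x) ^ (n + k)

/-- Baskakov operator `(V_n f)(x) = Σ_{k≥0} f(k/n) v_{k,n}(x)`. -/
noncomputable def baskakov (n : ℕ) (f : ℝ → ℝ) (x : ℝ) : ℝ :=
  ∑' k : ℕ, f ((k : ℝ) / n) * baskakovBasis n k x

/-- Polynomials θ_r^{(n)}: θ_0 = 1, θ_1 = 0 and
`n (r+1) θ_{r+1} = X (θ_r' + θ_{r-1})` for r ≥ 1, with X = x(1+x). -/
noncomputable def theta (n : ℕ) : ℕ → ℝ → ℝ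
  | 0 => fun _ => 1
  | 1 => fun _ => 0
  | r + 2 => fun x =>
      x * (1 + x) * (deriv (theta n (r + 1)) x + theta n r x) / (n * (r + 2))

/-- Polynomials η_r^{(n)}: η_0 = 1, η_1 = 0 and
`(n+r)(r+1) η_{r+1} = -r(1+2x) η_r - X η_{r-1}` for r ≥ 1, with X = x(1+x). -/
noncomputable def eta (n : ℕ) : ℕ → ℝ → ℝ
  | 0 => fun _ => 1
  | 1 => fun _ => 0
  | r + 2 => fun x =>
      (-((r + 1 : ℝ) * (1 + 2 * x) * eta n (r + 1) x) - x * (1 + x) * eta n r x) /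
        (((n : ℝ) + (r + 1)) * (r + 2))

/-- Rising factorial `(n)_r = n (n+1) ⋯ (n+r-1)`. -/
def risingFactorial (n r : ℕ) : ℕ := ∏ i ∈ Finset.range r, (n + i)

/-! The generating function `E(t) = Σ η_r t^r` solves `t E'' + (n + (1+2x) t) E' + x(1+x) t E = 0`.
Writing `E = e^{-xt} F` turns this into `t F'' + (n + t) F' - n x F = 0`, Kummer's equation for
`F(t) = M(-nx, n, -t) = Σ ρ_m t^m`. As the recurrence and `η_0 = 1`, `η_1 = 0` determine the `η_r`,
`E = e^{-xt} F`, and the expansion is the Cauchy product of the two series. -/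

open PowerSeries

section DiffOp

variable {R : Type*} [CommRing R]

theorem PowerSeries.coeff_X_mul_derivative (f : R⟦X⟧) (r : ℕ) :
    coeff r (X * d⁄dX R f) = r * coeff r f := by
  cases r with
  | zero => simp
  | succ r => rw [coeff_succ_X_mul, coeff_derivative, mul_comm]; push_cast; rfl

noncomputable def etaDiffOp (b x : R) (E : R⟦X⟧) : R⟦X⟧ :=
  X * d⁄dX R (d⁄dX R E) + b • d⁄dX R E + (1 + 2 * x) • (X * d⁄dX R E)
    + (x * (1 + x)) • (X * E)

noncomputable def kummerDiffOp (b c : R) (F : R⟦X⟧) : R⟦X⟧ :=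
  X * d⁄dX R (d⁄dX R F) + b • d⁄dX R F + X * d⁄dX R F - c • F

theorem coeff_succ_etaDiffOp (b x : R) (E : R⟦X⟧) (r : ℕ) :
    coeff (r + 1) (etaDiffOp b x E)
      = (b + (r + 1)) * (r + 2) * coeff (r + 2) E + (r + 1) * (1 + 2 * x) * coeff (r + 1) E
        + x * (1 + x) * coeff r E := by
  simp only [etaDiffOp, map_add, coeff_smul, coeff_succ_X_mul, coeff_derivative, smul_eq_mul]
  push_cast
  ring

theorem coeff_kummerDiffOp (b c : R) (F : R⟦X⟧) (r : ℕ) :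
    coeff r (kummerDiffOp b c F)
      = (r + 1) * (b + r) * coeff (r + 1) F - (c - r) * coeff r F := by
  simp only [kummerDiffOp, map_add, map_sub, coeff_smul, coeff_X_mul_derivative,
    coeff_derivative, smul_eq_mul]
  ring

theorem etaDiffOp_mul {b x : R} {U : R⟦X⟧} (hU : d⁄dX R U = -C x * U) (F : R⟦X⟧) :
    etaDiffOp b x (U * F) = U * kummerDiffOp b (b * x) F := by
  have hUF : d⁄dX R (U * F) = U * (d⁄dX R F - C x * F) := by
    rw [Derivation.leibniz, hU, smul_eq_mul, smul_eq_mul]; ring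
  have hUF' : d⁄dX R (d⁄dX R F - C x * F) = d⁄dX R (d⁄dX R F) - C x * d⁄dX R F := by
    simp only [map_sub, Derivation.leibniz, derivative_C, smul_eq_mul, mul_zero, add_zero]
  simp only [etaDiffOp, kummerDiffOp, hUF, Derivation.leibniz (d⁄dX R) U, hU, hUF',
    smul_eq_C_mul, smul_eq_mul, map_add, map_mul, map_ofNat, map_one]
  ring


noncomputable def expNegSeries (x : ℝ) : ℝ⟦X⟧ :=
  mk fun j ↦ (-1) ^ j * x ^ j / j.factorial

theorem derivative_expNegSeries (x : ℝ) :
    d⁄dX ℝ (expNegSeries x) = -C x * expNegSeries x := by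
  ext j
  simp only [expNegSeries, coeff_derivative, coeff_mk, neg_mul, map_neg, coeff_C_mul,
    Nat.factorial_succ]
  push_cast
  field_simp
  ring

theorem coeff_expNegSeries_mul (x : ℝ) (a : ℕ → ℝ) (m : ℕ) :
    coeff m (expNegSeries x * mk a)
      = ∑ j ∈ range (m + 1), (-1) ^ j * x ^ j / j.factorial * a (m - j) := by
  rw [coeff_mul, Nat.sum_antidiagonal_eq_sum_range_succ fun i j ↦
    coeff i (expNegSeries x) * coeff j (mk a)]
  simp only [expNegSeries, coeff_mk]

theorem risingFactorial_succ (n m : ℕ) :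
    risingFactorial n (m + 1) = risingFactorial n m * (n + m) :=
  prod_range_succ _ _

theorem risingFactorial_pos {n : ℕ} (hn : 0 < n) (m : ℕ) : 0 < risingFactorial n m :=
  prod_pos fun _ _ ↦ by omega

noncomputable def rho (n : ℕ) (x : ℝ) (m : ℕ) : ℝ :=
  (∏ i ∈ range m, ((n : ℝ) * x - i)) / (m.factorial * risingFactorial n m)

@[simp]
theorem rho_zero (n : ℕ) (x : ℝ) : rho n x 0 = 1 := by
  simp [rho, risingFactorial]

theorem rho_one {n : ℕ} (hn : 0 < n) (x : ℝ) : rho n x 1 = x := by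
  have hn' : (n : ℝ) ≠ 0 := by positivity
  simp [rho, risingFactorial, hn']

theorem rho_succ {n : ℕ} (hn : 0 < n) (x : ℝ) (m : ℕ) :
    (m + 1) * (n + m) * rho n x (m + 1) = (n * x - m) * rho n x m := by
  have hrf : (risingFactorial n m : ℝ) ≠ 0 := by exact_mod_cast (risingFactorial_pos hn m).ne'
  have hnm : (n : ℝ) + m ≠ 0 := by positivity
  simp only [rho, prod_range_succ, risingFactorial_succ, Nat.factorial_succ]
  push_cast
  field_simp

theorem kummerDiffOp_rho {n : ℕ} (hn : 0 < n) (x : ℝ) :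
    kummerDiffOp (n : ℝ) (n * x) (mk (rho n x)) = 0 := by
  ext r
  rw [coeff_kummerDiffOp, coeff_mk, coeff_mk, rho_succ hn, map_zero, sub_self]

theorem eta_eq_of_recurrence (n : ℕ) (x : ℝ) (s : ℕ → ℝ) (h0 : s 0 = 1) (h1 : s 1 = 0)
    (hrec : ∀ r : ℕ, ((n : ℝ) + (r + 1)) * (r + 2) * s (r + 2)
      + (r + 1) * (1 + 2 * x) * s (r + 1) + x * (1 + x) * s r = 0) (k : ℕ) :
    eta n k x = s k := by
  induction k using Nat.twoStepInduction with
  | zero => exact h0.symm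
  | one => exact h1.symm
  | more r ih ih' =>
    have hD : ((n : ℝ) + (r + 1)) * (r + 2) ≠ 0 := by positivity
    simp only [eta]
    rw [ih, ih', div_eq_iff hD]
    linear_combination -hrec r

/-- explicit expansion `η_k^{(n)}(x) = Σ_{j=0}^k (-1)^j (x^j/j!) ρ_{k-j}(x)`
with `ρ_m(x) = [nx]_m / (m! (n)_m)`. -/
theorem eta_explicit_expansion (n : ℕ) (hn : 1 ≤ n) (k : ℕ) (x : ℝ) :
    eta n k x
      = ∑ j ∈ Finset.range (k + 1),
          (-1 : ℝ) ^ j * x ^ j / (Nat.factorial j : ℝ) *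
            ((∏ i ∈ Finset.range (k - j), ((n : ℝ) * x - i)) /
              ((Nat.factorial (k - j) : ℝ) * (risingFactorial n (k - j) : ℝ))) := by
  set E := expNegSeries x * mk (rho n x)
  have hE : etaDiffOp (n : ℝ) x E = 0 := by
    rw [etaDiffOp_mul (derivative_expNegSeries x), kummerDiffOp_rho hn, mul_zero]
  refine (eta_eq_of_recurrence n x (fun m ↦ coeff m E) ?_ ?_ ?_ k).trans
    (coeff_expNegSeries_mul x _ k)
  · simp [E, coeff_expNegSeries_mul]
  · simp [E, coeff_expNegSeries_mul, sum_range_succ, rho_one hn]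
  · intro r
    rw [← coeff_succ_etaDiffOp, hE, map_zero]
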